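/- Let X ∈ L(𝒳 ⊗ 𝒴) with ‖X‖₁ = 1 and suppose Tr_𝒴(X) = uv* for unit vectors u, v ∈ 𝒳. Then there exists a density operator σ on 𝒴 such that X = uv* ⊗ σ. -/

import Mathlib

open Matrix Kronecker BigOperators ComplexOrder

noncomputable section

/-- Square root of a positive semidefinite matrix (removed from Mathlib; old definition). -/
noncomputable def Matrix.PosSemidef.sqrt {𝕜 : Type*} [RCLike 𝕜] {n : Type*} [Fintype n]
    [DecidableEq n] {A : Matrix n n 𝕜} (hA : A.PosSemidef) : Matrix n n 𝕜 :=
  hA.1.eigenvectorUnitary.1 * diagonal ((↑) ∘ (√·) ∘ hA.1.eigenvalues) *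
  (star hA.1.eigenvectorUnitary : Matrix n n 𝕜)

/-- Trace norm (sum of singular values) of a complex matrix. -/
noncomputable def traceNorm {l m : Type*} [Fintype l] [Fintype m] [DecidableEq m]
    (A : Matrix l m ℂ) : ℝ :=
  ((Matrix.posSemidef_conjTranspose_mul_self A).sqrt.trace).re

/-- Frobenius norm. -/
noncomputable def frobNorm {l m : Type*} [Fintype l] [Fintype m]
    (A : Matrix l m ℂ) : ℝ :=
  Real.sqrt ((Aᴴ * A).trace.re)

/-- Partial transpose on the first tensor factor. -/
def ptranspose {a b : Type*} (X : Matrix (a × b) (a × b) ℂ) : Matrix (a × b) (a × b) ℂ :=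
  Matrix.of fun p q => X (q.1, p.2) (p.1, q.2)

/-- Outer product `u v*`. -/
def outer {a : Type*} (u v : a → ℂ) : Matrix a a ℂ :=
  Matrix.of fun p q => u p * star (v q)

/-- Density operator: positive semidefinite with trace one. -/
def IsDensity {a : Type*} [Fintype a] (ρ : Matrix a a ℂ) : Prop :=
  ρ.PosSemidef ∧ ρ.trace = 1

/-- Maximally entangled unit vector in `ℂⁿ ⊗ ℂᵐ`. -/
def MaxEntangled (n m : ℕ) (u : Fin n × Fin m → ℂ) : Prop :=
  ∃ (x : Fin (min n m) → EuclideanSpace ℂ (Fin n))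
    (y : Fin (min n m) → EuclideanSpace ℂ (Fin m)),
    Orthonormal ℂ x ∧ Orthonormal ℂ y ∧
      ∀ p : Fin n × Fin m,
        u p = (1 / Real.sqrt (min n m) : ℝ) * ∑ i, x i p.1 * y i p.2

/-- Extension `Φ ⊗ I` of a matrix map to a system with ancilla `c`. -/
def tensorExt {a b c : Type*} [Fintype a] [DecidableEq a] [Fintype c]
    (Φ : Matrix a a ℂ →ₗ[ℂ] Matrix b b ℂ)
    (X : Matrix (a × c) (a × c) ℂ) : Matrix (b × c) (b × c) ℂ :=
  Matrix.of fun p q => Φ (Matrix.of fun i j => X (i, p.2) (j, q.2)) p.1 q.1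

/-- Quantum channel: completely positive and trace preserving. -/
def IsChannel {a b : Type*} [Fintype a] [DecidableEq a] [Fintype b]
    (Φ : Matrix a a ℂ →ₗ[ℂ] Matrix b b ℂ) : Prop :=
  (∀ X, (Φ X).trace = X.trace) ∧
    ∀ (k : ℕ) (X : Matrix (a × Fin k) (a × Fin k) ℂ),
      X.PosSemidef → (tensorExt Φ X).PosSemidef

/-- Partial trace over the second tensor factor. -/
def ptraceRight {a b : Type*} [Fintype b] (M : Matrix (a × b) (a × b) ℂ) :
    Matrix a a ℂ :=
  Matrix.of fun i k => ∑ c, M (i, c) (k, c)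

/-- Partial trace over the first tensor factor. -/
def ptraceLeft {a b : Type*} [Fintype a] (M : Matrix (a × b) (a × b) ℂ) :
    Matrix b b ℂ :=
  Matrix.of fun i k => ∑ c, M (c, i) (c, k)

/-- Canonical maximally entangled state `τ = (1/d) vec(I)vec(I)*` on `a ⊗ a`. -/
noncomputable def tauGen {a : Type*} [Fintype a] [DecidableEq a] :
    Matrix (a × a) (a × a) ℂ :=
  Matrix.of fun p q =>
    (Fintype.card a : ℂ)⁻¹ * (if p.1 = p.2 then 1 else 0) * (if q.1 = q.2 then 1 else 0)

/-- The operator `τ ⊗ σ` on `a ⊗ (a ⊗ r)`. -/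
noncomputable def tauSigma {a r : Type*} [Fintype a] [DecidableEq a]
    (σ : Matrix r r ℂ) : Matrix (a × (a × r)) (a × (a × r)) ℂ :=
  Matrix.of fun p q => tauGen (p.1, p.2.1) (q.1, q.2.1) * σ p.2.2 q.2.2

/-- Fidelity of two positive semidefinite matrices. -/
noncomputable def fidelity {a : Type*} [Fintype a] [DecidableEq a]
    {P Q : Matrix a a ℂ} (hP : P.PosSemidef) (hQ : Q.PosSemidef) : ℝ :=
  traceNorm (hP.sqrt * hQ.sqrt)

/-!
Let `P = √(X†X)`, so `‖X‖₁ = tr P`, and let `U = u ⊗ 1`, `V = v ⊗ 1` (isometries `𝒴 → 𝒳 ⊗ 𝒴`).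
The contraction `B = V U† = vu* ⊗ 1` satisfies `tr(BX) = u* Tr_𝒴(X) v = 1 = tr P` and
`‖BXz‖ ≤ ‖Xz‖ = ‖Pz‖`. On an eigenbasis of `P` this means `re ⟪w, BXw⟫ ≤ μ` for every eigenpair
`(μ, w)`, with equality in the sum, hence everywhere; equality in Cauchy–Schwarz then gives
`BX = P`. From `BX = P` one reads off `X = U σ V†` with `σ = V† P V ⪰ 0`, i.e. `X = uv* ⊗ σ`,
and `tr σ = tr(U† X V) = 1`.
-/

open scoped InnerProductSpace Matrix.Norms.L2Operator

namespace Matrix.PosSemidef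

variable {𝕜 : Type*} [RCLike 𝕜] {n : Type*} [Fintype n] [DecidableEq n]

theorem posSemidef_sqrt {A : Matrix n n 𝕜} (hA : A.PosSemidef) : hA.sqrt.PosSemidef := by
  rw [PosSemidef.sqrt, star_eq_conjTranspose]
  exact (posSemidef_diagonal_iff.mpr fun _ => RCLike.ofReal_nonneg.mpr (Real.sqrt_nonneg _)
    ).mul_mul_conjTranspose_same _

theorem sqrt_mul_self {A : Matrix n n 𝕜} (hA : A.PosSemidef) : hA.sqrt * hA.sqrt = A := by
  have hU : (star hA.1.eigenvectorUnitary : Matrix n n 𝕜) * hA.1.eigenvectorUnitary = 1 :=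
    Unitary.coe_star_mul_self _
  have hD : diagonal ((↑) ∘ (√·) ∘ hA.1.eigenvalues : n → 𝕜) *
      diagonal ((↑) ∘ (√·) ∘ hA.1.eigenvalues) = diagonal ((↑) ∘ hA.1.eigenvalues) := by
    rw [diagonal_mul_diagonal]
    congr 1
    ext i
    simp [← RCLike.ofReal_mul, Real.mul_self_sqrt (hA.eigenvalues_nonneg i)]
  conv_rhs => rw [hA.1.spectral_theorem, Unitary.conjStarAlgAut_apply, ← hD]
  simp only [PosSemidef.sqrt, Matrix.mul_assoc]
  rw [← Matrix.mul_assoc _ (hA.1.eigenvectorUnitary : Matrix n n 𝕜), hU, Matrix.one_mul]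

end Matrix.PosSemidef

theorem Matrix.PosSemidef.trace_eq_ofReal_re {n : Type*} [Fintype n] {P : Matrix n n ℂ}
    (hP : P.PosSemidef) : P.trace = (P.trace.re : ℂ) :=
  Complex.eq_re_of_ofReal_le (r := 0) (by rw [Complex.ofReal_zero]; exact hP.trace_nonneg)

theorem star_dotProduct_self_eq_sum_norm_sq {𝕜 a : Type*} [RCLike 𝕜] [Fintype a] (u : a → 𝕜) :
    star u ⬝ᵥ u = ((∑ i, ‖u i‖ ^ 2 : ℝ) : 𝕜) := by
  simp [dotProduct, RCLike.conj_mul]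

theorem outer_mulVec {a : Type*} [Fintype a] (u v w : a → ℂ) :
    outer u v *ᵥ w = (star v ⬝ᵥ w) • u := by
  ext i
  simp [outer, mulVec, dotProduct, Finset.mul_sum, mul_comm, mul_left_comm]

theorem eq_smul_of_norm_le_of_re_inner_eq {𝕜 E : Type*} [RCLike 𝕜] [NormedAddCommGroup E]
    [InnerProductSpace 𝕜 E] {a x : E} {r : ℝ} (ha : ‖a‖ ≤ 1) (hx : ‖x‖ ≤ r)
    (h : RCLike.re ⟪a, x⟫_𝕜 = r) : x = (r : 𝕜) • a := by
  have hr : 0 ≤ r := (norm_nonneg x).trans hx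
  have hxa : RCLike.re ⟪x, (r : 𝕜) • a⟫_𝕜 = r * r := by
    rw [inner_smul_right, RCLike.re_ofReal_mul, inner_re_symm (𝕜 := 𝕜), h]
  have hsq : ‖x - (r : 𝕜) • a‖ ^ 2 ≤ 0 := by
    rw [norm_sub_sq (𝕜 := 𝕜), hxa, norm_smul, RCLike.norm_ofReal, abs_of_nonneg hr]
    nlinarith [norm_nonneg a, norm_nonneg x, mul_le_mul hx hx (norm_nonneg x) hr,
      mul_le_mul ha ha (norm_nonneg a) zero_le_one]
  exact sub_eq_zero.mp <| norm_eq_zero.mp <|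
    (pow_eq_zero_iff two_ne_zero).mp (le_antisymm hsq (sq_nonneg _))

namespace Matrix

section Euclidean

variable {𝕜 : Type*} [RCLike 𝕜] {d e : Type*} [Fintype d] [DecidableEq d] [Fintype e]

theorem trace_eq_sum_inner_toEuclideanLin (A : Matrix d d 𝕜)
    (b : OrthonormalBasis d 𝕜 (EuclideanSpace 𝕜 d)) :
    A.trace = ∑ i, ⟪b i, toEuclideanLin A (b i)⟫_𝕜 := by
  rw [← LinearMap.trace_eq_sum_inner, toEuclideanLin_eq_toLin_orthonormal, trace_toLin_eq]

theorem inner_toEuclideanLin_self (A : Matrix e d 𝕜) (z : EuclideanSpace 𝕜 d) :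
    ⟪toEuclideanLin A z, toEuclideanLin A z⟫_𝕜 = ⟪toEuclideanLin (Aᴴ * A) z, z⟫_𝕜 := by
  classical
  rw [toLpLin_mul_same, LinearMap.comp_apply, toEuclideanLin_conjTranspose_eq_adjoint,
    LinearMap.adjoint_inner_left]

theorem norm_toEuclideanLin_eq_of_conjTranspose_mul_self_eq {f : Type*} [Fintype f]
    {A : Matrix e d 𝕜} {B : Matrix f d 𝕜} (h : Aᴴ * A = Bᴴ * B) (z : EuclideanSpace 𝕜 d) :
    ‖toEuclideanLin A z‖ = ‖toEuclideanLin B z‖ := by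
  have hsq : ‖toEuclideanLin A z‖ ^ 2 = ‖toEuclideanLin B z‖ ^ 2 := by
    rw [@norm_sq_eq_re_inner 𝕜, @norm_sq_eq_re_inner 𝕜, inner_toEuclideanLin_self,
      inner_toEuclideanLin_self, h]
  exact (sq_eq_sq₀ (norm_nonneg _) (norm_nonneg _)).mp hsq

theorem l2_opNorm_le_one_of_conjTranspose_mul_self_eq_one {U : Matrix e d 𝕜}
    (hU : Uᴴ * U = 1) : ‖U‖ ≤ 1 := by
  have hone : ‖(1 : Matrix d d 𝕜)‖ ≤ 1 := by
    have h := l2_opNorm_conjTranspose_mul_self (1 : Matrix d d 𝕜)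
    rw [conjTranspose_one, Matrix.one_mul] at h
    nlinarith [norm_nonneg (1 : Matrix d d 𝕜)]
  have h := l2_opNorm_conjTranspose_mul_self U
  rw [hU] at h
  nlinarith [norm_nonneg U]

theorem norm_toEuclideanLin_mul_le [DecidableEq e] {M : Matrix d e 𝕜} (hM : ‖M‖ ≤ 1)
    (X : Matrix e d 𝕜) (z : EuclideanSpace 𝕜 d) :
    ‖toEuclideanLin (M * X) z‖ ≤ ‖toEuclideanLin X z‖ := by
  rw [toLpLin_mul_same, LinearMap.comp_apply]
  exact (l2_opNorm_mulVec M (toEuclideanLin X z)).trans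
    (mul_le_of_le_one_left (norm_nonneg _) hM)

theorem l2_opNorm_mul_conjTranspose_le_one [DecidableEq e] {U V : Matrix d e 𝕜}
    (hU : Uᴴ * U = 1) (hV : Vᴴ * V = 1) : ‖V * Uᴴ‖ ≤ 1 := calc
  ‖V * Uᴴ‖ ≤ ‖V‖ * ‖U‖ := (l2_opNorm_mul V Uᴴ).trans_eq (by rw [l2_opNorm_conjTranspose])
  _ ≤ 1 := mul_le_one₀ (l2_opNorm_le_one_of_conjTranspose_mul_self_eq_one hV) (norm_nonneg U)
    (l2_opNorm_le_one_of_conjTranspose_mul_self_eq_one hU)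

theorem eq_of_norm_toEuclideanLin_le_of_trace_eq {Y P : Matrix d d 𝕜} (hP : P.PosSemidef)
    (hYP : ∀ z, ‖toEuclideanLin Y z‖ ≤ ‖toEuclideanLin P z‖) (htr : Y.trace = P.trace) :
    Y = P := by
  set w := hP.1.eigenvectorBasis
  set μ := hP.1.eigenvalues
  have hPw : ∀ i, toEuclideanLin P (w i) = (μ i : 𝕜) • w i := fun i =>
    congrArg (WithLp.toLp 2)
      ((hP.1.mulVec_eigenvectorBasis i).trans (RCLike.real_smul_eq_coe_smul _ _))
  have hnorm : ∀ i, ‖toEuclideanLin Y (w i)‖ ≤ μ i := fun i => by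
    simpa [hPw, norm_smul, w.orthonormal.1 i,
      abs_of_nonneg (show 0 ≤ μ i from hP.eigenvalues_nonneg i)] using hYP (w i)
  have hle : ∀ i, RCLike.re ⟪w i, toEuclideanLin Y (w i)⟫_𝕜 ≤ μ i := fun i =>
    (re_inner_le_norm _ _).trans (by simpa [w.orthonormal.1 i] using hnorm i)
  have hsum : ∑ i, RCLike.re ⟪w i, toEuclideanLin Y (w i)⟫_𝕜 = ∑ i, μ i := by
    have := congrArg RCLike.re htr
    rw [trace_eq_sum_inner_toEuclideanLin Y w, hP.1.trace_eq_sum_eigenvalues, map_sum,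
      map_sum] at this
    simpa only [RCLike.ofReal_re] using this
  have heq := (Finset.sum_eq_sum_iff_of_le fun i _ => hle i).mp hsum
  refine toEuclideanLin.injective (w.toBasis.ext fun i => ?_)
  rw [OrthonormalBasis.coe_toBasis, hPw]
  exact eq_smul_of_norm_le_of_re_inner_eq (w.orthonormal.1 i).le (hnorm i)
    (heq i (Finset.mem_univ i))

end Euclidean

section Isometry

variable {𝕜 : Type*} [RCLike 𝕜] {a c k : Type*} [Fintype a] [Fintype k] [DecidableEq k]

theorem mul_conjTranspose_mul_eq_self {U : Matrix a k 𝕜} (hU : Uᴴ * U = 1) {X : Matrix a c 𝕜}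
    (h : (Uᴴ * X)ᴴ * (Uᴴ * X) = Xᴴ * X) : U * (Uᴴ * X) = X := by
  set Y := Uᴴ * X
  have hXU : Xᴴ * U = Yᴴ := by rw [conjTranspose_mul, conjTranspose_conjTranspose]
  have hD : (X - U * Y)ᴴ * (X - U * Y) = 0 := by
    rw [conjTranspose_sub, conjTranspose_mul, Matrix.sub_mul, Matrix.mul_sub, Matrix.mul_sub,
      ← Matrix.mul_assoc Xᴴ, hXU, Matrix.mul_assoc Yᴴ Uᴴ X, Matrix.mul_assoc Yᴴ,
      ← Matrix.mul_assoc Uᴴ, hU, Matrix.one_mul, ← h]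
    abel
  exact (sub_eq_zero.mp (conjTranspose_mul_self_eq_zero.mp hD)).symm

theorem eq_mul_mul_conjTranspose_of_mul_conjTranspose_mul_eq [Fintype c] {U : Matrix a k 𝕜}
    {V : Matrix c k 𝕜} {X : Matrix a c 𝕜} {P : Matrix c c 𝕜} (hU : Uᴴ * U = 1)
    (hV : Vᴴ * V = 1) (hP : P.IsHermitian) (hXP : Xᴴ * X = Pᴴ * P) (hVUX : V * Uᴴ * X = P) :
    X = U * (Vᴴ * P * V) * Vᴴ := by
  have hVP : Vᴴ * P = Uᴴ * X := by
    rw [← hVUX, Matrix.mul_assoc V, ← Matrix.mul_assoc Vᴴ, hV, Matrix.one_mul]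
  have hVVP : V * (Vᴴ * P) = P := by rw [hVP, ← Matrix.mul_assoc, hVUX]
  have hUX : U * (Uᴴ * X) = X := by
    refine mul_conjTranspose_mul_eq_self hU ?_
    rw [hXP, ← hVP, conjTranspose_mul, conjTranspose_conjTranspose, Matrix.mul_assoc, hVVP]
  have hPV : P * V * Vᴴ = P := by
    simpa only [conjTranspose_mul, conjTranspose_conjTranspose, hP.eq] using
      congrArg conjTranspose hVVP
  calc X = U * (Vᴴ * (P * V * Vᴴ)) := by rw [hPV, hVP, hUX]
    _ = U * (Vᴴ * P * V) * Vᴴ := by simp only [Matrix.mul_assoc]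

end Isometry

end Matrix

def vecKronOne {a : Type*} (b : Type*) [DecidableEq b] (u : a → ℂ) : Matrix (a × b) b ℂ :=
  of fun p j => u p.1 * (1 : Matrix b b ℂ) p.2 j

section vecKronOne

variable {a b : Type*} [Fintype b] [DecidableEq b]

theorem vecKronOne_mul_mul_conjTranspose (u v : a → ℂ) (N : Matrix b b ℂ) :
    vecKronOne b u * N * (vecKronOne b v)ᴴ = outer u v ⊗ₖ N := by
  ext ⟨i, j⟩ ⟨k, l⟩
  simp only [vecKronOne, one_apply, mul_ite, mul_one, mul_zero, mul_apply, of_apply, ite_mul,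
    zero_mul, Finset.sum_ite_eq, Finset.mem_univ, ↓reduceIte, conjTranspose_apply,
    RCLike.star_def, apply_ite (starRingEnd ℂ), map_zero, outer, kroneckerMap_apply]
  ring

variable [Fintype a]

theorem conjTranspose_vecKronOne_mul_vecKronOne (u v : a → ℂ) :
    (vecKronOne b u)ᴴ * vecKronOne b v = (star u ⬝ᵥ v) • (1 : Matrix b b ℂ) := by
  ext j l
  simp [vecKronOne, mul_apply, one_apply, Fintype.sum_prod_type, dotProduct,
    apply_ite (starRingEnd ℂ), eq_comm]

theorem conjTranspose_vecKronOne_mul_self {u : a → ℂ} (hu : ∑ i, ‖u i‖ ^ 2 = (1 : ℝ)) :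
    (vecKronOne b u)ᴴ * vecKronOne b u = 1 := by
  rw [conjTranspose_vecKronOne_mul_vecKronOne, star_dotProduct_self_eq_sum_norm_sq, hu,
    RCLike.ofReal_one, one_smul]

theorem trace_conjTranspose_vecKronOne_mul_mul_vecKronOne (u v : a → ℂ)
    (M : Matrix (a × b) (a × b) ℂ) :
    ((vecKronOne b u)ᴴ * M * vecKronOne b v).trace = star u ⬝ᵥ (ptraceRight M *ᵥ v) := by
  simp only [trace, vecKronOne, one_apply, mul_ite, mul_one, mul_zero, diag_apply, mul_apply,
    conjTranspose_apply, of_apply, RCLike.star_def, apply_ite (starRingEnd ℂ), map_zero, ite_mul,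
    zero_mul, Fintype.sum_prod_type, Finset.sum_ite_eq', Finset.mem_univ, ↓reduceIte,
    Finset.sum_mul, mul_assoc, dotProduct, Pi.star_apply, mulVec, ptraceRight, Finset.mul_sum]
  rw [Finset.sum_congr rfl fun _ _ => Finset.sum_comm, Finset.sum_comm]
  exact Finset.sum_congr rfl fun _ _ => Finset.sum_comm

end vecKronOne

/-- If `‖X‖₁ = 1` and the partial trace of `X` over the second factor is a rank-one
operator `uv*` with `u, v` unit vectors, then `X = uv* ⊗ σ` for a density operator `σ`. -/
theorem stmt7 (n m : ℕ) (X : Matrix (Fin n × Fin m) (Fin n × Fin m) ℂ)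
    (hX : traceNorm X = 1) (u v : Fin n → ℂ)
    (hu : ∑ i, ‖u i‖ ^ 2 = (1 : ℝ)) (hv : ∑ i, ‖v i‖ ^ 2 = (1 : ℝ))
    (h : ptraceRight X = outer u v) :
    ∃ σ : Matrix (Fin m) (Fin m) ℂ, IsDensity σ ∧ X = outer u v ⊗ₖ σ := by
  set P := (posSemidef_conjTranspose_mul_self X).sqrt
  have hP : P.PosSemidef := (posSemidef_conjTranspose_mul_self X).posSemidef_sqrt
  have hXP : Xᴴ * X = Pᴴ * P := by rw [hP.1.eq, PosSemidef.sqrt_mul_self]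
  have hPtr : P.trace = 1 := by rw [hP.trace_eq_ofReal_re]; exact_mod_cast hX
  set U := vecKronOne (Fin m) u
  set V := vecKronOne (Fin m) v
  have hUU : Uᴴ * U = 1 := conjTranspose_vecKronOne_mul_self hu
  have hVV : Vᴴ * V = 1 := conjTranspose_vecKronOne_mul_self hv
  have htr : (Uᴴ * X * V).trace = 1 := by
    rw [trace_conjTranspose_vecKronOne_mul_mul_vecKronOne, h, outer_mulVec, dotProduct_smul,
      star_dotProduct_self_eq_sum_norm_sq, star_dotProduct_self_eq_sum_norm_sq, hu, hv]
    simp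
  have hVUX : V * Uᴴ * X = P := by
    refine eq_of_norm_toEuclideanLin_le_of_trace_eq hP (fun z => ?_) ?_
    · rw [← norm_toEuclideanLin_eq_of_conjTranspose_mul_self_eq hXP z]
      exact norm_toEuclideanLin_mul_le (l2_opNorm_mul_conjTranspose_le_one hUU hVV) X z
    · rw [hPtr, Matrix.mul_assoc, trace_mul_comm, htr]
  refine ⟨Vᴴ * P * V, ⟨hP.conjTranspose_mul_mul_same V, ?_⟩, ?_⟩
  · simp only [← hVUX, ← Matrix.mul_assoc, hVV, Matrix.one_mul, htr]
  · rw [← vecKronOne_mul_mul_conjTranspose]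
    exact eq_mul_mul_conjTranspose_of_mul_conjTranspose_mul_eq hUU hVV hP.1 hXP hVUX
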